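/- In particular (the case A = 0, R = 1 of the saddle point lemma): for fixed B > 0 and θ > 0, (1/2πi)∫_{C₁(B/√n)} e^{B²/z + nz} dz = (√B/(2√π)) n^{-3/4} e^{2B√n} (1 + O(n^{-1/2})) as n → ∞, where C₁(B/√n) = { (B/√n)(1+iy) : |y| ≤ θ }. -/

import Mathlib

/-!
On the contour `z = (B/√n)(1 + iy)` the exponent is `B²/z + nz = s (2 + saddlePhase y)` with
`s = B√n` and `saddlePhase y = -y²/(1 + iy) = -y² + ψ y`, `ψ y = iy³/(1 + iy)`, so the integral is
`(B/√n)/(2π) · e^{2s} · ∫_{-θ}^{θ} e^{s saddlePhase}` and it suffices to show that the last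
integral is `√(π/s) + O(s^{-3/2})`. Write `e^{s saddlePhase} = e^{-sy²} (1 + sψ + R)` with
`|R| ≤ |sψ|² e^{|sψ|}`. Averaging over `±y` replaces `ψ` by its real part `y⁴/(1+y²)`, and
`|ψ y| ≤ q y²` with `q = θ/√(1+θ²) < 1` on `[-θ, θ]` keeps `e^{-sy²} |R|` Gaussian. Every error
term is then a Gaussian moment `s^j ∫ y^{2k} e^{-csy²} = O(s^{j-k-1/2})` (`c = 1` or `1 - q`),
and the Gaussian tail outside `[-θ, θ]` is bounded by Chebyshev's inequality.
-/

open Real Complex Filter intervalIntegral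

/-- The contour integral (1/2πi)∫_{C₁(B/√n)} e^{B²/z+nz} dz, where
C₁(η) = {η(1+iy) : |y| ≤ θ} is parametrized by y (dz = iη dy), so that
(1/2πi)∫ = (η/2π)∫_{-θ}^{θ} e^{B²/z(y)+nz(y)} dy with z(y) = η(1+iy). -/
noncomputable def saddleIntegral0 (B θ : ℝ) (n : ℕ) : ℂ :=
  ((B / Real.sqrt n) / (2 * π) : ℝ) *
    ∫ y in (-θ)..θ,
      Complex.exp (((B : ℂ) ^ 2) / (((B / Real.sqrt n : ℝ) : ℂ) * (1 + (y : ℂ) * Complex.I)) +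
        (n : ℂ) * (((B / Real.sqrt n : ℝ) : ℂ) * (1 + (y : ℂ) * Complex.I)))

open MeasureTheory
open scoped Nat

namespace Real

lemma pow_mul_exp_neg_le {t : ℝ} (ht : 0 ≤ t) (k : ℕ) :
    t ^ k * exp (-t) ≤ 2 ^ k * k ! * exp (-(t / 2)) := by
  have h := pow_div_factorial_le_exp _ (div_nonneg ht zero_le_two) k
  rw [div_pow, div_div, div_le_iff₀ (by positivity)] at h
  calc t ^ k * exp (-t) ≤ exp (t / 2) * (2 ^ k * k !) * exp (-t) := by gcongr
    _ = 2 ^ k * k ! * exp (-(t / 2)) := by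
      rw [mul_comm, ← mul_assoc, ← exp_add]; ring_nf

lemma pow_mul_exp_neg_mul_sq_le {b : ℝ} (hb : 0 < b) (k : ℕ) (y : ℝ) :
    y ^ (2 * k) * exp (-b * y ^ 2) ≤ 2 ^ k * k ! / b ^ k * exp (-(b / 2) * y ^ 2) := by
  have h := pow_mul_exp_neg_le (mul_nonneg hb.le (sq_nonneg y)) k
  rw [div_mul_eq_mul_div, le_div_iff₀' (by positivity), pow_mul]
  calc b ^ k * ((y ^ 2) ^ k * exp (-b * y ^ 2)) = (b * y ^ 2) ^ k * exp (-(b * y ^ 2)) := by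
        ring_nf
    _ ≤ 2 ^ k * k ! * exp (-(b * y ^ 2 / 2)) := h
    _ = 2 ^ k * k ! * exp (-(b / 2) * y ^ 2) := by ring_nf

lemma integrable_pow_mul_exp_neg_mul_sq {b : ℝ} (hb : 0 < b) (k : ℕ) :
    Integrable fun y : ℝ ↦ y ^ (2 * k) * exp (-b * y ^ 2) :=
  ((integrable_exp_neg_mul_sq (half_pos hb)).const_mul (2 ^ k * k ! / b ^ k)).mono'
    (by fun_prop) (ae_of_all _ fun y ↦ by
      rw [norm_of_nonneg (by rw [pow_mul]; positivity)]
      exact pow_mul_exp_neg_mul_sq_le hb k y)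

lemma integral_pow_mul_exp_neg_mul_sq_le {b : ℝ} (hb : 0 < b) (k : ℕ) :
    ∫ y : ℝ, y ^ (2 * k) * exp (-b * y ^ 2) ≤ 2 ^ k * k ! / b ^ k * √(2 * π / b) := by
  calc ∫ y : ℝ, y ^ (2 * k) * exp (-b * y ^ 2)
      ≤ ∫ y : ℝ, 2 ^ k * k ! / b ^ k * exp (-(b / 2) * y ^ 2) :=
        integral_mono (integrable_pow_mul_exp_neg_mul_sq hb k)
          ((integrable_exp_neg_mul_sq (half_pos hb)).const_mul _)
          (pow_mul_exp_neg_mul_sq_le hb k)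
    _ = 2 ^ k * k ! / b ^ k * √(2 * π / b) := by
      rw [MeasureTheory.integral_const_mul, integral_gaussian, div_div_eq_mul_div, mul_comm π]

end Real

lemma Complex.norm_exp_sub_one_sub_le (w : ℂ) :
    ‖exp w - 1 - w‖ ≤ ‖w‖ ^ 2 * Real.exp ‖w‖ := by
  simpa [Finset.sum_range_succ, sub_sub] using norm_exp_sub_sum_le_norm_mul_exp w 2

lemma div_sqrt_one_add_sq_lt_one (θ : ℝ) : θ / √(1 + θ ^ 2) < 1 := by
  rw [div_lt_one (by positivity)]
  exact (le_abs_self θ).trans_lt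
    (by rw [← sqrt_sq_eq_abs]; exact sqrt_lt_sqrt (sq_nonneg _) (by linarith))

lemma rpow_neg_three_div_four {x : ℝ} (hx : 0 ≤ x) :
    x ^ (-3 / 4 : ℝ) = (√x * √√x)⁻¹ := by
  rw [sqrt_eq_rpow, sqrt_eq_rpow, ← rpow_mul hx, ← rpow_add' hx (by norm_num),
    ← rpow_neg hx]
  norm_num

lemma rpow_neg_one_div_two {x : ℝ} (hx : 0 ≤ x) : x ^ (-1 / 2 : ℝ) = (√x)⁻¹ := by
  rw [sqrt_eq_rpow, ← rpow_neg hx]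
  norm_num

lemma intervalIntegral_add_comp_neg {E : Type*} [NormedAddCommGroup E] [NormedSpace ℝ E]
    {f : ℝ → E} (hf : Continuous f) (a : ℝ) :
    ∫ y in -a..a, (f y + f (-y)) = 2 • ∫ y in -a..a, f y := by
  have hf' : Continuous fun y ↦ f (-y) := hf.comp continuous_neg
  rw [integral_add (hf.intervalIntegrable _ _) (hf'.intervalIntegrable _ _),
    integral_comp_neg, neg_neg, two_nsmul]

lemma intervalIntegral_le_integral {g : ℝ → ℝ} {a b : ℝ} (hab : a ≤ b) (hg : Integrable g)
    (hg0 : ∀ y, 0 ≤ g y) : ∫ y in a..b, g y ≤ ∫ y, g y := by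
  rw [integral_of_le hab]
  exact setIntegral_le_integral hg (ae_of_all _ hg0)

lemma abs_integral_sub_intervalIntegral_le {g : ℝ → ℝ} {θ : ℝ} (hθ : 0 < θ)
    (hg0 : ∀ y, 0 ≤ g y) (hg : Integrable g) (hg2 : Integrable fun y ↦ y ^ 2 * g y) :
    |(∫ y, g y) - ∫ y in -θ..θ, g y| ≤ (∫ y, y ^ 2 * g y) / θ ^ 2 := by
  have htail : (∫ y, g y) - ∫ y in -θ..θ, g y = ∫ y in (Set.Ioc (-θ) θ)ᶜ, g y := by
    rw [integral_of_le (by linarith)]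
    exact sub_eq_of_eq_add' (integral_add_compl measurableSet_Ioc hg).symm
  have hchebyshev : ∀ y ∈ (Set.Ioc (-θ) θ)ᶜ, g y ≤ y ^ 2 * g y / θ ^ 2 := fun y hy ↦ by
    have : θ ^ 2 ≤ y ^ 2 := by
      rw [Set.mem_compl_iff, Set.mem_Ioc, not_and_or, not_lt, not_le] at hy
      rcases hy with hy | hy <;> nlinarith
    rw [le_div_iff₀ (by positivity)]
    exact mul_le_mul_of_nonneg_left this (hg0 y) |>.trans_eq (mul_comm _ _)
  rw [htail, abs_of_nonneg (setIntegral_nonneg measurableSet_Ioc.compl fun y _ ↦ hg0 y)]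
  calc ∫ y in (Set.Ioc (-θ) θ)ᶜ, g y ≤ ∫ y in (Set.Ioc (-θ) θ)ᶜ, y ^ 2 * g y / θ ^ 2 :=
        setIntegral_mono_on hg.integrableOn (hg2.div_const _).integrableOn
          measurableSet_Ioc.compl hchebyshev
    _ ≤ ∫ y, y ^ 2 * g y / θ ^ 2 :=
        setIntegral_le_integral (hg2.div_const _) (ae_of_all _ fun y ↦ by
          have := hg0 y; positivity)
    _ = (∫ y, y ^ 2 * g y) / θ ^ 2 := integral_div _ _

noncomputable def saddlePhase (y : ℝ) : ℂ := -(y : ℂ) ^ 2 / (1 + y * I)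

lemma one_add_ofReal_mul_I_ne_zero (y : ℝ) : (1 : ℂ) + y * I ≠ 0 := by
  intro h
  simpa using congrArg re h

lemma saddlePhase_add_sq (y : ℝ) :
    saddlePhase y + (y : ℂ) ^ 2
      = ((y ^ 4 / (1 + y ^ 2) : ℝ) : ℂ) + ((y ^ 3 / (1 + y ^ 2) : ℝ) : ℂ) * I := by
  have h1 : (1 : ℂ) + y * I ≠ 0 := one_add_ofReal_mul_I_ne_zero y
  have h2 : (1 : ℂ) + (y : ℂ) ^ 2 ≠ 0 := by
    exact_mod_cast (by positivity : (1 + y ^ 2 : ℝ) ≠ 0)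
  rw [saddlePhase]
  push_cast
  field_simp
  ring_nf
  simp only [I_sq]
  ring

lemma norm_saddlePhase_add_sq (y : ℝ) :
    ‖saddlePhase y + (y : ℂ) ^ 2‖ = √(y ^ 6 / (1 + y ^ 2)) := by
  rw [saddlePhase_add_sq, norm_add_mul_I]
  congr 1
  field_simp
  ring

lemma norm_saddlePhase_add_sq_le {θ y : ℝ} (hy : |y| ≤ θ) :
    ‖saddlePhase y + (y : ℂ) ^ 2‖ ≤ θ / √(1 + θ ^ 2) * y ^ 2 := by
  have hy2 : y ^ 2 ≤ θ ^ 2 := sq_le_sq' (abs_le.1 hy).1 (abs_le.1 hy).2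
  have hθ : 0 ≤ θ := (abs_nonneg y).trans hy
  rw [norm_saddlePhase_add_sq, sqrt_le_iff, mul_pow, div_pow, sq_sqrt (by positivity)]
  refine ⟨by positivity, ?_⟩
  rw [div_mul_eq_mul_div, div_le_div_iff₀ (by positivity) (by positivity)]
  nlinarith [pow_nonneg (sq_nonneg y) 2]

lemma saddlePhase_add_sq_add_neg (y : ℝ) :
    (saddlePhase y + (y : ℂ) ^ 2) + (saddlePhase (-y) + ((-y : ℝ) : ℂ) ^ 2)
      = ((2 * y ^ 4 / (1 + y ^ 2) : ℝ) : ℂ) := by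
  rw [saddlePhase_add_sq, saddlePhase_add_sq]
  push_cast
  ring

lemma continuous_saddlePhase : Continuous saddlePhase :=
  Continuous.div (by fun_prop) (by fun_prop) one_add_ofReal_mul_I_ne_zero

lemma exp_neg_mul_sq_mul_norm_exp_sub_one_sub_le {s θ y : ℝ} (hs : 0 ≤ s) (hy : |y| ≤ θ) :
    Real.exp (-s * y ^ 2) *
        ‖exp (s * (saddlePhase y + y ^ 2)) - 1 - s * (saddlePhase y + y ^ 2)‖
      ≤ s ^ 2 * y ^ 6 * Real.exp (-((1 - θ / √(1 + θ ^ 2)) * s) * y ^ 2) := by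
  set w : ℂ := s * (saddlePhase y + y ^ 2)
  have hw : ‖w‖ = s * ‖saddlePhase y + (y : ℂ) ^ 2‖ := by
    rw [norm_mul, norm_real, norm_of_nonneg hs]
  have hw_le : ‖w‖ ≤ θ / √(1 + θ ^ 2) * s * y ^ 2 := by
    rw [hw, mul_comm _ s, mul_assoc]
    exact mul_le_mul_of_nonneg_left (norm_saddlePhase_add_sq_le hy) hs
  have hw_sq : ‖w‖ ^ 2 ≤ s ^ 2 * y ^ 6 := by
    rw [hw, mul_pow, norm_saddlePhase_add_sq, sq_sqrt (by positivity)]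
    exact mul_le_mul_of_nonneg_left (div_le_self (by positivity) (by nlinarith)) (sq_nonneg s)
  calc Real.exp (-s * y ^ 2) * ‖exp w - 1 - w‖
      ≤ Real.exp (-s * y ^ 2) * (s ^ 2 * y ^ 6 * Real.exp (θ / √(1 + θ ^ 2) * s * y ^ 2)) := by
        gcongr
        exact (Complex.norm_exp_sub_one_sub_le w).trans (by gcongr)
    _ = s ^ 2 * y ^ 6 * Real.exp (-((1 - θ / √(1 + θ ^ 2)) * s) * y ^ 2) := by
        rw [mul_left_comm, ← Real.exp_add]
        ring_nf

lemma norm_exp_mul_saddlePhase_add_neg_sub_le {s θ y : ℝ} (hs : 0 ≤ s) (hy : |y| ≤ θ) :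
    ‖exp (s * saddlePhase y) + exp (s * saddlePhase (-y)) - 2 * Real.exp (-s * y ^ 2)‖
      ≤ 2 * (s * y ^ 4 * Real.exp (-s * y ^ 2)
        + s ^ 2 * y ^ 6 * Real.exp (-((1 - θ / √(1 + θ ^ 2)) * s) * y ^ 2)) := by
  set w : ℂ := s * (saddlePhase y + y ^ 2)
  set w' : ℂ := s * (saddlePhase (-y) + ((-y : ℝ) : ℂ) ^ 2)
  set G : ℝ := Real.exp (-s * y ^ 2)
  have hexp : ∀ v : ℝ, v ^ 2 = y ^ 2 →
      exp (s * saddlePhase v) = G * exp (s * (saddlePhase v + v ^ 2)) := fun v hv ↦ by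
    rw [ofReal_exp, ← Complex.exp_add, ← hv]
    push_cast
    ring_nf
  have hsum : ‖w + w'‖ ≤ 2 * s * y ^ 4 := by
    rw [← mul_add, saddlePhase_add_sq_add_neg, ← ofReal_mul, norm_real,
      norm_of_nonneg (by positivity), mul_div_assoc', div_le_iff₀ (by positivity)]
    nlinarith [mul_nonneg hs (pow_nonneg (sq_nonneg y) 3)]
  have hG : 0 ≤ G := (Real.exp_pos _).le
  have hR := exp_neg_mul_sq_mul_norm_exp_sub_one_sub_le hs hy
  have hR' :=
    exp_neg_mul_sq_mul_norm_exp_sub_one_sub_le (θ := θ) (y := -y) hs (by rwa [abs_neg])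
  simp only [neg_sq, Even.neg_pow (by decide : Even 6)] at hR'
  rw [hexp y rfl, hexp (-y) (neg_sq y)]
  calc ‖G * exp w + G * exp w' - 2 * G‖
      = ‖(G : ℂ) * ((w + w') + (exp w - 1 - w) + (exp w' - 1 - w'))‖ := by ring_nf
    _ = G * ‖(w + w') + (exp w - 1 - w) + (exp w' - 1 - w')‖ := by
        rw [norm_mul, norm_real, norm_of_nonneg hG]
    _ ≤ G * (‖w + w'‖ + ‖exp w - 1 - w‖ + ‖exp w' - 1 - w'‖) :=
        mul_le_mul_of_nonneg_left (norm_add₃_le ..) hG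
    _ ≤ _ := by linarith [mul_le_mul_of_nonneg_left hsum hG]

lemma norm_intervalIntegral_exp_mul_saddlePhase_symm_sub_le {s θ : ℝ} (hs : 0 < s)
    (hθ : 0 ≤ θ) :
    ‖∫ y in -θ..θ, (exp (s * saddlePhase y) + exp (s * saddlePhase (-y))
        - 2 * Real.exp (-s * y ^ 2))‖
      ≤ 2 * (s * ∫ y, y ^ (2 * 2) * Real.exp (-s * y ^ 2))
        + 2 * (s ^ 2 *
          ∫ y, y ^ (2 * 3) * Real.exp (-((1 - θ / √(1 + θ ^ 2)) * s) * y ^ 2)) := by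
  set c := 1 - θ / √(1 + θ ^ 2)
  have hcs : 0 < c * s := mul_pos (sub_pos.2 (div_sqrt_one_add_sq_lt_one θ)) hs
  have h2 := (Real.integrable_pow_mul_exp_neg_mul_sq hs 2).const_mul (2 * s)
  have h3 := (Real.integrable_pow_mul_exp_neg_mul_sq hcs 3).const_mul (2 * s ^ 2)
  calc _ ≤ ∫ y in -θ..θ, (2 * s * (y ^ (2 * 2) * Real.exp (-s * y ^ 2))
          + 2 * s ^ 2 * (y ^ (2 * 3) * Real.exp (-(c * s) * y ^ 2))) := by
        refine norm_integral_le_of_norm_le (by linarith) (ae_of_all _ fun y hy ↦ ?_)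
          (h2.add h3).intervalIntegrable
        calc _ ≤ 2 * (s * y ^ 4 * Real.exp (-s * y ^ 2)
              + s ^ 2 * y ^ 6 * Real.exp (-(c * s) * y ^ 2)) :=
              norm_exp_mul_saddlePhase_add_neg_sub_le hs.le (abs_le.2 ⟨hy.1.le, hy.2⟩)
          _ = _ := by ring
    _ ≤ ∫ y, (2 * s * (y ^ (2 * 2) * Real.exp (-s * y ^ 2))
          + 2 * s ^ 2 * (y ^ (2 * 3) * Real.exp (-(c * s) * y ^ 2))) :=
        intervalIntegral_le_integral (by linarith) (h2.add h3) fun y ↦ by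
          simp only [pow_mul]; positivity
    _ = _ := by
        rw [integral_add h2 h3, MeasureTheory.integral_const_mul,
          MeasureTheory.integral_const_mul]
        ring

theorem exists_norm_integral_exp_mul_saddlePhase_sub_le {θ : ℝ} (hθ : 0 < θ) :
    ∃ K, ∀ s : ℝ, 0 < s →
      ‖(∫ y in -θ..θ, exp (s * saddlePhase y)) - √(π / s)‖ ≤ K / (s * √s) := by
  set c := 1 - θ / √(1 + θ ^ 2)
  have hc : 0 < c := sub_pos.2 (div_sqrt_one_add_sq_lt_one θ)
  -- `8 = 2² 2!`, `48 = 2³ 3!` and `2 = 2¹ 1!` are the Gaussian moment constants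
  refine ⟨√(2 * π) * (8 + 48 / (c ^ 3 * √c) + 2 / θ ^ 2), fun s hs ↦ ?_⟩
  have hE : Continuous fun y ↦ exp (s * saddlePhase y) :=
    continuous_exp.comp (continuous_const.mul continuous_saddlePhase)
  have hG : Continuous fun y : ℝ ↦ 2 * (Real.exp (-s * y ^ 2) : ℂ) := by fun_prop
  have hdecomp : 2 * ((∫ y in -θ..θ, exp (s * saddlePhase y)) - √(π / s))
      = (∫ y in -θ..θ, (exp (s * saddlePhase y) + exp (s * saddlePhase (-y))
          - 2 * Real.exp (-s * y ^ 2)))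
        + 2 * (((∫ y in -θ..θ, Real.exp (-s * y ^ 2)) - √(π / s) : ℝ) : ℂ) := by
    rw [integral_sub (f := fun y ↦ exp (s * saddlePhase y) + exp (s * saddlePhase (-y)))
      ((hE.add (hE.comp continuous_neg)).intervalIntegrable _ _)
      (hG.intervalIntegrable _ _), intervalIntegral_add_comp_neg hE,
      intervalIntegral.integral_const_mul, integral_ofReal, two_nsmul]
    push_cast
    ring
  have htail : |(∫ y in -θ..θ, Real.exp (-s * y ^ 2)) - √(π / s)|
      ≤ (∫ y, y ^ (2 * 1) * Real.exp (-s * y ^ 2)) / θ ^ 2 := by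
    rw [abs_sub_comm, ← integral_gaussian]
    exact abs_integral_sub_intervalIntegral_le hθ (fun y ↦ (Real.exp_pos _).le)
      (integrable_exp_neg_mul_sq hs) (Real.integrable_pow_mul_exp_neg_mul_sq hs 1)
  have hsplit := (congrArg norm hdecomp).le.trans ((norm_add_le _ _).trans
    (add_le_add_left (norm_intervalIntegral_exp_mul_saddlePhase_symm_sub_le hs hθ.le) _))
  rw [norm_mul, norm_mul, norm_real, Complex.norm_ofNat, Real.norm_eq_abs] at hsplit
  have hM1 := Real.integral_pow_mul_exp_neg_mul_sq_le hs 1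
  have hM2 := Real.integral_pow_mul_exp_neg_mul_sq_le hs 2
  have hM3 := Real.integral_pow_mul_exp_neg_mul_sq_le (mul_pos hc hs) 3
  calc _ ≤ s * (2 ^ 2 * 2 ! / s ^ 2 * √(2 * π / s))
        + s ^ 2 * (2 ^ 3 * 3 ! / (c * s) ^ 3 * √(2 * π / (c * s)))
        + 2 ^ 1 * 1 ! / s ^ 1 * √(2 * π / s) / θ ^ 2 := by
        have := div_le_div_of_nonneg_right hM1 (sq_nonneg θ)
        linarith [mul_le_mul_of_nonneg_left hM2 hs.le,
          mul_le_mul_of_nonneg_left hM3 (sq_nonneg s)]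
    _ = √(2 * π) * (8 + 48 / (c ^ 3 * √c) + 2 / θ ^ 2) / (s * √s) := by
        rw [sqrt_div' _ (mul_pos hc hs).le, sqrt_mul hc.le, sqrt_div' _ hs.le]
        field_simp
        norm_num [Nat.factorial]
        ring

lemma sq_div_add_mul_eq_saddlePhase {B r : ℝ} (hB : B ≠ 0) (hr : r ≠ 0) (y : ℝ) :
    (B : ℂ) ^ 2 / (((B / r : ℝ) : ℂ) * (1 + y * I))
        + ((r ^ 2 : ℝ) : ℂ) * (((B / r : ℝ) : ℂ) * (1 + y * I))
      = 2 * (B * r : ℝ) + (B * r : ℝ) * saddlePhase y := by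
  have hy := one_add_ofReal_mul_I_ne_zero y
  have hBc : (B : ℂ) ≠ 0 := ofReal_ne_zero.2 hB
  have hrc : (r : ℂ) ≠ 0 := ofReal_ne_zero.2 hr
  rw [saddlePhase]
  push_cast
  field_simp
  ring_nf
  rw [I_sq]
  ring

lemma saddleIntegral0_eq {B θ : ℝ} (hB : B ≠ 0) {n : ℕ} (hn : 0 < n) :
    saddleIntegral0 B θ n = ((B / √n / (2 * π) * Real.exp (2 * (B * √n)) : ℝ) : ℂ) *
      ∫ y in -θ..θ, exp ((B * √n : ℝ) * saddlePhase y) := by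
  have hr : √(n : ℝ) ≠ 0 := (sqrt_pos.2 (Nat.cast_pos.2 hn)).ne'
  have hnr : (n : ℂ) = ((√n ^ 2 : ℝ) : ℂ) := by rw [sq_sqrt (Nat.cast_nonneg n), ofReal_natCast]
  simp_rw [saddleIntegral0, hnr, sq_div_add_mul_eq_saddlePhase hB hr, Complex.exp_add,
    intervalIntegral.integral_const_mul, ofReal_mul, ofReal_exp, ← mul_assoc]
  push_cast
  ring_nf

/-- The case A = 0, R = 1 of the saddle point lemma:
(1/2πi)∫_{C₁(B/√n)} e^{B²/z+nz} dz = (√B/(2√π)) n^{-3/4} e^{2B√n} (1 + O(n^{-1/2})). -/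
theorem saddle_point_asymp_special (B θ : ℝ) (hB : 0 < B) (hθ : 0 < θ) :
    (fun n : ℕ => saddleIntegral0 B θ n -
        ((Real.sqrt B / (2 * Real.sqrt π) * (n : ℝ) ^ (-(3 : ℝ) / 4) *
          Real.exp (2 * B * Real.sqrt n) : ℝ) : ℂ)) =O[atTop]
      (fun n : ℕ => (n : ℝ) ^ (-(3 : ℝ) / 4) * Real.exp (2 * B * Real.sqrt n) *
        (n : ℝ) ^ (-(1 : ℝ) / 2)) := by
  obtain ⟨K, hK⟩ := exists_norm_integral_exp_mul_saddlePhase_sub_le hθ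
  refine Asymptotics.IsBigO.of_bound (K / (2 * π * √B)) ?_
  filter_upwards [eventually_gt_atTop 0] with n hn
  have hx : 0 < (n : ℝ) := Nat.cast_pos.2 hn
  have hs : 0 < B * √n := by positivity
  have hmain : √B / (2 * √π) * (n : ℝ) ^ (-(3 : ℝ) / 4) * Real.exp (2 * B * √n)
      = B / √n / (2 * π) * Real.exp (2 * (B * √n)) * √(π / (B * √n)) := by
    rw [rpow_neg_three_div_four hx.le, sqrt_div' _ hs.le, sqrt_mul hB.le]
    field_simp
    rw [sq_sqrt hB.le, sq_sqrt pi_pos.le, mul_comm]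
  rw [saddleIntegral0_eq hB.ne' hn, hmain, ofReal_mul _ (√(π / (B * √n))), ← mul_sub, norm_mul,
    norm_real, norm_of_nonneg (by positivity), rpow_neg_three_div_four hx.le,
    rpow_neg_one_div_two hx.le]
  calc _ ≤ B / √n / (2 * π) * Real.exp (2 * (B * √n)) * (K / (B * √n * √(B * √n))) := by
        gcongr
        exact hK _ hs
    _ = _ := by
      rw [norm_of_nonneg (by positivity), sqrt_mul hB.le]
      field_simp
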